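/- arXiv:2203.01709 — 2 statements merged into one kernel-verified Lean document; each statement's English description precedes it below -/
import Mathlib

section
/- Let F be a field of characteristic 0 and let Φ : M_n(F) → M_k(F) be a multiplicative map with Φ(0) = 0 and Φ(I_n) = I_k that is trivial, i.e., Φ(A) = I_k for every A ∈ M_n(F) with det A = 1. Then Φ(A) = 0 for every A ∈ M_n(F) with rank(A) < n. -/
open Matrix Equiv Finset Polynomial

/-- A trivial multiplicative map `Φ : M_n(F) → M_k(F)`
(with `Φ(0) = 0`, `Φ(I_n) = I_k`, and `Φ(A) = I_k` whenever `det A = 1`)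
kills every matrix of rank less than `n`. -/
theorem trivial_multiplicative_map_kills_singular {F : Type*} [Field F] [CharZero F]
    {n k : ℕ}
    (Φ : Matrix (Fin n) (Fin n) F → Matrix (Fin k) (Fin k) F)
    (hmul : ∀ A B, Φ (A * B) = Φ A * Φ B)
    (h0 : Φ 0 = 0) (h1 : Φ 1 = 1)
    (htriv : ∀ A : Matrix (Fin n) (Fin n) F, A.det = 1 → Φ A = 1) :
    ∀ A : Matrix (Fin n) (Fin n) F, A.rank < n → Φ A = 0 := by
  intro A hA
  classical
  have hn : 0 < n := lt_of_le_of_lt (Nat.zero_le _) hA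
  obtain ⟨m, rfl⟩ : ∃ m, n = m + 1 := ⟨n - 1, (Nat.succ_pred_eq_of_pos hn).symm⟩
  -- Φ respects positive powers
  have hpow : ∀ (X : Matrix (Fin (m+1)) (Fin (m+1)) F) (j : ℕ),
      Φ (X ^ (j+1)) = Φ X ^ (j+1) := by
    intro X j
    induction j with
    | zero => simp
    | succ j ih => rw [pow_succ X (j+1), hmul, ih, ← pow_succ]
  -- Φ is invariant under multiplication by determinant-one matrices
  have key : ∀ (P Q B : Matrix (Fin (m+1)) (Fin (m+1)) F), P.det = 1 → Q.det = 1 →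
      Φ (P * B * Q) = Φ B := by
    intro P Q B hP hQ
    rw [hmul, hmul, htriv P hP, htriv Q hQ, one_mul, mul_one]
  -- A is singular
  have hdet : A.det = 0 := by
    by_contra h
    have hu : IsUnit A := (Matrix.isUnit_iff_isUnit_det A).mpr (isUnit_iff_ne_zero.mpr h)
    have hr := Matrix.rank_of_isUnit A hu
    rw [hr, Fintype.card_fin] at hA
    exact lt_irrefl _ hA
  -- reduce to a diagonal matrix by transvections
  obtain ⟨L, L', d, hLd⟩ := Matrix.Pivot.exists_list_transvec_mul_mul_list_transvec_eq_diagonal A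
  have hPhiA : Φ (diagonal d) = Φ A := by
    rw [← hLd]
    exact key _ _ _ (Matrix.TransvectionStruct.det_toMatrix_prod L)
      (Matrix.TransvectionStruct.det_toMatrix_prod L')
  have hprodd : ∏ i, d i = 0 := by
    have h := congrArg Matrix.det hLd
    rw [Matrix.det_mul, Matrix.det_mul, Matrix.TransvectionStruct.det_toMatrix_prod,
      Matrix.det_diagonal, hdet] at h
    rw [← h]; ring
  obtain ⟨j₀, -, hj₀⟩ := Finset.prod_eq_zero_iff.mp hprodd
  -- move the zero entry to the last position, via a determinant-one conjugation
  set τ : Equiv.Perm (Fin (m+1)) := Equiv.swap j₀ (Fin.last m) with hτ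
  set d₁ : Fin (m+1) → F := d ∘ τ with hd₁
  have hd₁last : d₁ (Fin.last m) = 0 := by
    simp only [hd₁, Function.comp_apply, hτ, Equiv.swap_apply_right]
    exact hj₀
  have hPhid₁ : Φ (diagonal d₁) = Φ (diagonal d) := by
    set P : Matrix (Fin (m+1)) (Fin (m+1)) F := τ.permMatrix F with hP
    set ε : F := P.det with hε
    have hεsq : ε * ε = 1 := by
      rw [hε, hP, Matrix.det_permutation]
      rcases Int.units_eq_one_or (Equiv.Perm.sign τ) with h | h <;> rw [h] <;> norm_num
    set s : Fin (m+1) → F := fun i => if i = Fin.last m then ε else 1 with hs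
    set S : Matrix (Fin (m+1)) (Fin (m+1)) F := diagonal s with hS
    have hdetS : S.det = ε := by
      rw [hS, Matrix.det_diagonal, hs]
      simp
    have hssq : ∀ i, s i * s i = 1 := by
      intro i
      by_cases hi : i = Fin.last m <;> simp [hs, hi, hεsq]
    have hSdS : S * diagonal d * S = diagonal d := by
      ext i j
      rw [hS, Matrix.mul_diagonal, Matrix.diagonal_mul]
      by_cases hij : i = j
      · subst hij
        rw [Matrix.diagonal_apply_eq]
        calc s i * d i * s i = d i * (s i * s i) := by ring
        _ = d i := by rw [hssq i, mul_one]
      · rw [Matrix.diagonal_apply_ne _ hij, mul_zero, zero_mul]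
    have hPP : P * diagonal d * P = diagonal d₁ := by
      rw [hP, Equiv.Perm.permMatrix, PEquiv.toMatrix_toPEquiv_mul, PEquiv.mul_toMatrix_toPEquiv,
        Matrix.submatrix_submatrix, Function.comp_id, Function.id_comp]
      have hsymm : τ.symm = τ := by rw [hτ, Equiv.symm_swap]
      rw [hsymm, Matrix.submatrix_diagonal d τ τ.injective, ← hd₁]
    have h2 : (P * S) * diagonal d * (S * P) = diagonal d₁ := by
      calc (P * S) * diagonal d * (S * P) = P * (S * diagonal d * S) * P := by
            simp only [Matrix.mul_assoc]
      _ = diagonal d₁ := by rw [hSdS, hPP]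
    rw [← h2]
    exact key _ _ _ (by rw [Matrix.det_mul, hdetS, ← hε, hεsq])
      (by rw [Matrix.det_mul, hdetS, ← hε, mul_comm, hεsq])
  -- replace the diagonal by an idempotent 0/1 diagonal, multiplying by a det-one diagonal
  set e : Fin (m+1) → F := fun i => if d₁ i = 0 then 0 else 1 with he
  have helast : e (Fin.last m) = 0 := by simp [he, hd₁last]
  set q : F := ∏ i ∈ Finset.univ.erase (Fin.last m), (if d₁ i = 0 then 1 else (d₁ i)⁻¹) with hq
  have hq0 : q ≠ 0 := by
    rw [hq]
    apply Finset.prod_ne_zero_iff.mpr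
    intro i _
    by_cases hi : d₁ i = 0 <;> simp [hi, inv_ne_zero]
  set d' : Fin (m+1) → F :=
    fun i => if i = Fin.last m then q⁻¹ else if d₁ i = 0 then 1 else (d₁ i)⁻¹ with hd'
  have hdetd' : (diagonal d').det = 1 := by
    rw [Matrix.det_diagonal,
      ← Finset.mul_prod_erase Finset.univ d' (Finset.mem_univ (Fin.last m))]
    have h1' : d' (Fin.last m) = q⁻¹ := by simp [hd']
    have h2' : ∏ i ∈ Finset.univ.erase (Fin.last m), d' i = q := by
      rw [hq]
      apply Finset.prod_congr rfl
      intro i hi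
      have hine : i ≠ Fin.last m := Finset.ne_of_mem_erase hi
      simp [hd', hine]
    rw [h1', h2', inv_mul_cancel₀ hq0]
  have hdd' : diagonal d₁ * diagonal d' = diagonal e := by
    have hfe : (fun i => d₁ i * d' i) = e := by
      funext i
      by_cases hi : i = Fin.last m
      · subst hi
        simp [hd', he, hd₁last]
      · by_cases hz : d₁ i = 0
        · simp [hd', he, hi, hz]
        · simp [hd', he, hi, hz, mul_inv_cancel₀ hz]
    rw [diagonal_mul_diagonal, hfe]
  have hPhie : Φ (diagonal e) = Φ (diagonal d₁) := by
    rw [← hdd', hmul, htriv _ hdetd', mul_one]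
  -- the idempotent diagonal
  have hidem : diagonal e * diagonal e = diagonal e := by
    have hfe : (fun i => e i * e i) = e := by
      funext i
      by_cases hz : d₁ i = 0 <;> simp [he, hz]
    rw [diagonal_mul_diagonal, hfe]
  have hEpow : (diagonal e) ^ (m+1) = diagonal e :=
    IsIdempotentElem.pow_succ_eq m hidem
  -- the nilpotent companion: multiply by a (det-corrected) cyclic permutation matrix
  set σc : Equiv.Perm (Fin (m+1)) := finRotate (m+1) with hσc
  set C : Matrix (Fin (m+1)) (Fin (m+1)) F := σc.permMatrix F with hC
  have hCapply : ∀ i j, C i j = if σc i = j then 1 else 0 := by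
    intro i j
    rw [hC]
    simp [Equiv.Perm.permMatrix, PEquiv.toMatrix_apply, Equiv.toPEquiv_apply, Option.mem_def]
  set N : Matrix (Fin (m+1)) (Fin (m+1)) F := diagonal e * C with hN
  have hNapply : ∀ i j, N i j = e i * (if σc i = j then 1 else 0) := by
    intro i j
    rw [hN, Matrix.diagonal_mul, hCapply]
  have hσval : ∀ i : Fin (m+1), i ≠ Fin.last m → ((σc i : ℕ) = (i : ℕ) + 1) := by
    intro i hi
    rw [hσc, finRotate_succ_apply]
    exact Fin.val_add_one_of_lt (lt_of_le_of_ne (Fin.le_last i) hi)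
  have hNzero : ∀ i j : Fin (m+1), (j : ℕ) ≤ (i : ℕ) → N i j = 0 := by
    intro i j hij
    rw [hNapply]
    by_cases hei : e i = 0
    · rw [hei, zero_mul]
    · have hilast : i ≠ Fin.last m := by
        intro h; rw [h] at hei; exact hei helast
      have hne : σc i ≠ j := by
        intro h
        have := hσval i hilast
        rw [h] at this
        omega
      rw [if_neg hne, mul_zero]
  have hBT : N.BlockTriangular id := by
    intro i j hij
    exact hNzero i j (le_of_lt hij)
  have hcp : N.charpoly = X ^ (m+1) := by
    rw [Matrix.charpoly_of_upperTriangular N hBT]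
    rw [Finset.prod_congr rfl (fun i _ => by rw [hNzero i i (le_refl _), map_zero, sub_zero])]
    simp
  have hNpow : N ^ (m+1) = 0 := by
    have h := N.aeval_self_charpoly
    rwa [hcp, map_pow, aeval_X] at h
  -- determinant-one correction of the cyclic permutation matrix
  set εc : F := C.det with hεc
  have hεcsq : εc * εc = 1 := by
    rw [hεc, hC, Matrix.det_permutation]
    rcases Int.units_eq_one_or (Equiv.Perm.sign σc) with h | h <;> rw [h] <;> norm_num
  set t : Fin (m+1) → F := fun i => if i = (0 : Fin (m+1)) then εc else 1 with ht
  set T : Matrix (Fin (m+1)) (Fin (m+1)) F := diagonal t with hT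
  have hdetT : T.det = εc := by
    rw [hT, Matrix.det_diagonal, ht]
    simp
  have hNcol0 : ∀ i, N i 0 = 0 := by
    intro i
    rw [hNapply]
    by_cases hei : e i = 0
    · rw [hei, zero_mul]
    · have hilast : i ≠ Fin.last m := by
        intro h; rw [h] at hei; exact hei helast
      have hne : σc i ≠ 0 := by
        intro h
        have := hσval i hilast
        rw [h] at this
        simp at this
      rw [if_neg hne, mul_zero]
  have hNT : N * T = N := by
    ext i j
    rw [hT, Matrix.mul_diagonal]
    by_cases hj : j = 0
    · subst hj
      simp [hNcol0 i]
    · rw [ht]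
      simp [hj]
  have hdetCT : (C * T).det = 1 := by
    rw [Matrix.det_mul, hdetT, ← hεc, hεcsq]
  have hPhiN : Φ N = Φ (diagonal e) := by
    have hrw : N = diagonal e * (C * T) := by
      rw [← Matrix.mul_assoc, ← hN, hNT]
    rw [hrw, hmul, htriv _ hdetCT, mul_one]
  -- conclude
  have hPhiE : Φ (diagonal e) = 0 := by
    calc Φ (diagonal e) = Φ ((diagonal e) ^ (m+1)) := by rw [hEpow]
    _ = Φ (diagonal e) ^ (m+1) := hpow _ m
    _ = Φ N ^ (m+1) := by rw [hPhiN]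
    _ = Φ (N ^ (m+1)) := (hpow _ m).symm
    _ = 0 := by rw [hNpow, h0]
  rw [← hPhiA, ← hPhid₁, ← hPhie]
  exact hPhiE
end

section
/- Let F be a field of characteristic 0, let A ∈ M_n(F) with rank(A) = r < n. Then there exist matrices S, T ∈ M_n(F) with det S = 1 and det T = 1 and a nilpotent matrix N ∈ M_n(F) with rank(N) = r such that A = S · N · T. -/
/-!
Any two square matrices of the same rank are equivalent, so `A = P * N * Q` with `P, Q`
invertible for any fixed nilpotent `N` of rank `r`. Take for `N` the matrix with ones at
`(i, i + 1)` for `i < r`: as `r < n`, its row `r` and its column `0` vanish, so multiplying `P`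
on the right and `Q` on the left by diagonal matrices that differ from `1` only at those places
leaves `P * N * Q` unchanged and makes both determinants `1`.
-/

namespace Matrix

variable {m R K : Type*} [Fintype m] [DecidableEq m]

theorem isUnit_permMatrix [CommRing R] (σ : Equiv.Perm m) : IsUnit (σ.permMatrix R) := by
  rw [isUnit_iff_isUnit_det, det_permutation]
  exact (Units.isUnit _).map (Int.castRingHom R)

theorem submatrix_equiv_eq_permMatrix_mul_mul {ι : Type*} [NonAssocSemiring R]
    (X : Matrix ι ι R) (e e' : m ≃ ι) :
    X.submatrix e e = Equiv.Perm.permMatrix R (e.trans e'.symm) * X.submatrix e' e' *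
      Equiv.Perm.permMatrix R (e'.trans e.symm) := by
  rw [PEquiv.toMatrix_toPEquiv_mul, PEquiv.mul_toMatrix_toPEquiv, submatrix_submatrix,
    submatrix_submatrix]
  congr <;> ext <;> simp

theorem exists_eq_mul_mul_of_rank_eq [Field K] {A B : Matrix m m K} (h : A.rank = B.rank) :
    ∃ P Q : GL m K, A = P * B * Q := by
  -- both normal forms are `fromBlocks 1 0 0 0`, reindexed along possibly different equivalences
  obtain ⟨V, U, e, hV, hU, hA⟩ := exists_rank_normal_form A
  obtain ⟨V', U', e', hV', hU', hB⟩ := h ▸ exists_rank_normal_form B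
  lift V to GL m K using hV
  lift U to GL m K using hU
  refine ⟨V⁻¹ * (isUnit_permMatrix (e.trans e'.symm)).unit * hV'.unit,
    hU'.unit * (isUnit_permMatrix (e'.trans e.symm)).unit * U⁻¹, ?_⟩
  calc A = ↑V⁻¹ * (V * A * U) * ↑U⁻¹ := by simp [mul_assoc]
    _ = _ := by
      rw [hA, submatrix_equiv_eq_permMatrix_mul_mul _ e e', ← hB]
      simp [mul_assoc]

theorem diagonal_mulSingle_mul_of_row_eq_zero [CommRing R] {N : Matrix m m R} {i₀ : m}
    (hN : ∀ j, N i₀ j = 0) (c : R) : diagonal (Pi.mulSingle i₀ c) * N = N := by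
  ext i j
  rw [diagonal_mul]
  obtain rfl | hi := eq_or_ne i i₀
  · rw [hN, mul_zero]
  · rw [Pi.mulSingle_eq_of_ne hi, one_mul]

theorem mul_diagonal_mulSingle_of_col_eq_zero [CommRing R] {N : Matrix m m R} {j₀ : m}
    (hN : ∀ i, N i j₀ = 0) (c : R) : N * diagonal (Pi.mulSingle j₀ c) = N := by
  ext i j
  rw [mul_diagonal]
  obtain rfl | hj := eq_or_ne j j₀
  · rw [hN, zero_mul]
  · rw [Pi.mulSingle_eq_of_ne hj, mul_one]

theorem det_diagonal_mulSingle [CommRing R] (i : m) (c : R) :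
    (diagonal (Pi.mulSingle i c)).det = c := by
  simp [det_diagonal, Finset.prod_pi_mulSingle']

theorem exists_det_eq_one_mul_mul_eq [CommRing R] (P Q : GL m R) {N : Matrix m m R}
    {i₀ j₀ : m} (hrow : ∀ j, N i₀ j = 0) (hcol : ∀ i, N i j₀ = 0) :
    ∃ S T : Matrix m m R, S.det = 1 ∧ T.det = 1 ∧ (P : Matrix m m R) * N * Q = S * N * T := by
  refine ⟨P * diagonal (Pi.mulSingle i₀ (((GeneralLinearGroup.det P)⁻¹ : Rˣ) : R)),
    diagonal (Pi.mulSingle j₀ (((GeneralLinearGroup.det Q)⁻¹ : Rˣ) : R)) * Q, ?_, ?_, ?_⟩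
  · rw [det_mul, det_diagonal_mulSingle, ← GeneralLinearGroup.val_det_apply, Units.mul_inv]
  · rw [det_mul, det_diagonal_mulSingle, ← GeneralLinearGroup.val_det_apply, Units.inv_mul]
  · rw [mul_assoc _ _ N, diagonal_mulSingle_mul_of_row_eq_zero hrow, mul_assoc, mul_assoc,
      ← mul_assoc N, mul_diagonal_mulSingle_of_col_eq_zero hcol]

theorem isNilpotent_of_isUpperTriangular [CommRing R] [LinearOrder m] {M : Matrix m m R}
    (hM : M.IsUpperTriangular) (hdiag : ∀ i, M i i = 0) : IsNilpotent M :=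
  ⟨Fintype.card m, by
    simpa [charpoly_of_isUpperTriangular M hM, hdiag] using M.aeval_self_charpoly⟩

/-- For `r < n`, the matrix with ones at `(i, i + 1)` for `i < r` and zeros elsewhere. -/
def truncatedShift (K : Type*) [Semiring K] (n r : ℕ) : Matrix (Fin n) (Fin n) K :=
  diagonal (fun i : Fin n => if (i : ℕ) < r then (1 : K) else 0) * (finRotate n).permMatrix K

theorem val_finRotate_of_lt {n : ℕ} {i : Fin n} (h : (i : ℕ) + 1 < n) :
    (finRotate n i : ℕ) = i + 1 := by
  rw [finRotate_apply, Fin.val_add_one_of_lt' h]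

variable {n r : ℕ}

theorem truncatedShift_row_eq_zero [Semiring R] {i : Fin n} (hi : r ≤ i) (j : Fin n) :
    truncatedShift R n r i j = 0 := by
  simp [truncatedShift, diagonal_mul, hi.not_gt]

theorem truncatedShift_apply_of_le [Semiring R] {i j : Fin n} (hr : r < n) (hji : j ≤ i) :
    truncatedShift R n r i j = 0 := by
  rcases le_or_gt r i with hi | hi
  · exact truncatedShift_row_eq_zero hi j
  have hσ : j < finRotate n i := by
    rw [Fin.lt_def, val_finRotate_of_lt (by omega)]
    exact Nat.lt_succ_of_le hji
  simp only [truncatedShift, diagonal_mul, Equiv.Perm.permMatrix, PEquiv.toMatrix_apply,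
    Equiv.toPEquiv_apply, Option.mem_def, Option.some.injEq, hσ.ne', if_false, mul_zero]

theorem isNilpotent_truncatedShift [CommRing R] (hr : r < n) :
    IsNilpotent (truncatedShift R n r) :=
  isNilpotent_of_isUpperTriangular (fun _ _ h => truncatedShift_apply_of_le hr h.le)
    (fun _ => truncatedShift_apply_of_le hr le_rfl)

theorem rank_truncatedShift [Field K] (hr : r ≤ n) : (truncatedShift K n r).rank = r := by
  classical
  rw [truncatedShift, rank_mul_eq_left_of_isUnit_det _ _
    ((isUnit_permMatrix _).map detMonoidHom), rank_diagonal]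
  simp [Fintype.card_subtype, Fin.card_filter_val_lt, hr]

end Matrix

theorem exists_sl_factorization_nilpotent_general {F : Type*} [Field F] {n r : ℕ}
    (A : Matrix (Fin n) (Fin n) F) (hA : A.rank = r) (hr : r < n) :
    ∃ S T N : Matrix (Fin n) (Fin n) F, S.det = 1 ∧ T.det = 1 ∧
      IsNilpotent N ∧ N.rank = r ∧ A = S * N * T := by
  have hrank : (Matrix.truncatedShift F n r).rank = r := Matrix.rank_truncatedShift hr.le
  obtain ⟨P, Q, hPQ⟩ := Matrix.exists_eq_mul_mul_of_rank_eq (hA.trans hrank.symm)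
  obtain ⟨S, T, hS, hT, hST⟩ := Matrix.exists_det_eq_one_mul_mul_eq P Q
    (Matrix.truncatedShift_row_eq_zero (i := ⟨r, hr⟩) le_rfl)
    (fun _ => Matrix.truncatedShift_apply_of_le (j := ⟨0, by omega⟩) hr (Nat.zero_le _))
  exact ⟨S, T, _, hS, hT, Matrix.isNilpotent_truncatedShift hr, hrank, hPQ.trans hST⟩

/-- If `A ∈ M_n(F)` has rank `r < n`, then `A = S · N · T`
with `det S = det T = 1` and `N` nilpotent of rank `r`. -/
theorem exists_sl_factorization_nilpotent {F : Type*} [Field F] [CharZero F] {n r : ℕ}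
    (A : Matrix (Fin n) (Fin n) F) (hA : A.rank = r) (hr : r < n) :
    ∃ S T N : Matrix (Fin n) (Fin n) F, S.det = 1 ∧ T.det = 1 ∧
      IsNilpotent N ∧ N.rank = r ∧ A = S * N * T :=
  exists_sl_factorization_nilpotent_general A hA hr
end
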